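/- The class-II witness at θ = π, namely W_II(π) = W[0,1,1,1] (the witness of the reduction map), satisfies: (a) ⟨φ⊗(star∘φ), W[0,1,1,1](φ⊗(star∘φ))⟩ = 0 for every φ : Fin 4 → ℂ; and (b) the ℂ-linear span of {φ⊗(star∘φ) : φ : Fin 4 → ℂ} is all of ℂ¹⁶ (dimension 16), so W[0,1,1,1] has the spanning property. -/

import Mathlib

open Matrix Complex Real

/-- The tensor (product) vector `x ⊗ y` in `ℂ¹⁶`. -/
noncomputable def tensorVec (x y : Fin 4 → ℂ) : Fin 4 × Fin 4 → ℂ :=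
  fun p => x p.1 * y p.2

/-- The expectation `⟨v, W v⟩ = ∑ i, conj (v i) * (W *ᵥ v) i`. -/
noncomputable def expec (W : Matrix (Fin 4 × Fin 4) (Fin 4 × Fin 4) ℂ)
    (v : Fin 4 × Fin 4 → ℂ) : ℂ :=
  ∑ i, star (v i) * W.mulVec v i

/-- The Bell-diagonal matrix `W[a,b,c,d]` with `(α₀,α₁,α₂,α₃) = (a,b,c,d)`:
`W((k,m),(k',m')) = α_{(m−k) mod 4}` if `k=k', m=m'`; `−1` if `k=m, k'=m', k≠k'`;
`0` otherwise. -/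
noncomputable def Wabcd (a b c d : ℝ) : Matrix (Fin 4 × Fin 4) (Fin 4 × Fin 4) ℂ :=
  fun p q =>
    if p.1 = q.1 ∧ p.2 = q.2 then ((![a, b, c, d] (p.2 - p.1) : ℝ) : ℂ)
    else if p.1 = p.2 ∧ q.1 = q.2 ∧ p.1 ≠ q.1 then -1
    else 0

/-- The class-I witness `W_I(θ)`. -/
noncomputable def WI (θ : ℝ) : Matrix (Fin 4 × Fin 4) (Fin 4 × Fin 4) ℂ :=
  Wabcd ((2 - Real.sin θ) / 2) ((1 + Real.cos θ) / 2)
        (2 - (2 - Real.sin θ) / 2) (1 - (1 + Real.cos θ) / 2)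

/-- The class-II witness `W_II(θ)`. -/
noncomputable def WII (θ : ℝ) : Matrix (Fin 4 × Fin 4) (Fin 4 × Fin 4) ℂ :=
  Wabcd ((1 + Real.cos θ) / 2) ((2 - Real.sin θ) / 2)
        (1 - (1 + Real.cos θ) / 2) (2 - (2 - Real.sin θ) / 2)

/-- The maximally entangled vector `Ψ(j,j') = (−1)^{j+1}/2` if `j = j'`, else `0`. -/
noncomputable def PsiVec : Fin 4 × Fin 4 → ℂ :=
  fun p => if p.1 = p.2 then ((-1 : ℂ) ^ ((p.1 : ℕ) + 1)) / 2 else 0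

/-- The rank-one projector `P = |Ψ⟩⟨Ψ|`. -/
noncomputable def Pmat : Matrix (Fin 4 × Fin 4) (Fin 4 × Fin 4) ℂ :=
  fun u v => PsiVec u * star (PsiVec v)

/-! `W[0,1,1,1] = 1 - |Φ⟩⟨Φ|` with `Φ = ∑ₖ eₖ ⊗ eₖ` unnormalized (the Choi matrix of the reduction
map), so `⟨v, W v⟩ = ⟨v, v⟩ - ⟨v, Φ⟩⟨Φ, v⟩`. For `v = φ ⊗ φ̄` both `⟨v, Φ⟩` and `⟨Φ, v⟩` equal
`‖φ‖²` and `⟨v, v⟩ = ‖φ‖⁴`, which gives (a). For (b), polarization puts every `x ⊗ ȳ`, in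
particular every standard basis vector `eₖ ⊗ eₘ`, into the span of the vectors `φ ⊗ φ̄`. -/

open scoped ComplexConjugate

lemma expec_one_sub_vecMulVec (u w v : Fin 4 × Fin 4 → ℂ) :
    expec (1 - vecMulVec u w) v = star v ⬝ᵥ v - (star v ⬝ᵥ u) * (w ⬝ᵥ v) := by
  change star v ⬝ᵥ ((1 - vecMulVec u w) *ᵥ v) = _
  simp [sub_mulVec, vecMulVec_mulVec, mul_comm]

def maxEntVec : Fin 4 × Fin 4 → ℂ := fun p => if p.1 = p.2 then 1 else 0

lemma vecCons_zero_one_one_one_apply (j : Fin 4) :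
    (![0, 1, 1, 1] : Fin 4 → ℝ) j = if j = 0 then 0 else 1 := by
  fin_cases j <;> rfl

lemma Wabcd_zero_one_one_one : Wabcd 0 1 1 1 = 1 - vecMulVec maxEntVec maxEntVec := by
  ext ⟨k, m⟩ ⟨k', m'⟩
  simp only [Wabcd, vecCons_zero_one_one_one_apply, sub_eq_zero, Matrix.sub_apply, one_apply,
    vecMulVec_apply, maxEntVec, Prod.ext_iff]
  by_cases hkm : k = m <;> by_cases hk : k = k' <;> by_cases hm : m = m' <;>
    by_cases h' : k' = m' <;> simp_all [eq_comm]

lemma star_tensorVec_dotProduct_self (φ : Fin 4 → ℂ) :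
    star (tensorVec φ (star ∘ φ)) ⬝ᵥ tensorVec φ (star ∘ φ) = (φ ⬝ᵥ star φ) ^ 2 := by
  simp only [dotProduct, tensorVec, Fintype.sum_prod_type, Pi.star_apply, Function.comp_apply,
    star_mul', star_star, sq, Finset.sum_mul_sum]
  exact Finset.sum_congr rfl fun k _ => Finset.sum_congr rfl fun m _ => by ring

lemma star_tensorVec_dotProduct_maxEntVec (φ : Fin 4 → ℂ) :
    star (tensorVec φ (star ∘ φ)) ⬝ᵥ maxEntVec = φ ⬝ᵥ star φ := by
  simp [dotProduct, tensorVec, maxEntVec, Fintype.sum_prod_type, mul_comm]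

lemma maxEntVec_dotProduct_tensorVec (φ : Fin 4 → ℂ) :
    maxEntVec ⬝ᵥ tensorVec φ (star ∘ φ) = φ ⬝ᵥ star φ := by
  simp [dotProduct, tensorVec, maxEntVec, Fintype.sum_prod_type]

lemma expec_Wabcd_zero_one_one_one_tensorVec (φ : Fin 4 → ℂ) :
    expec (Wabcd 0 1 1 1) (tensorVec φ (star ∘ φ)) = 0 := by
  rw [Wabcd_zero_one_one_one, expec_one_sub_vecMulVec, star_tensorVec_dotProduct_self,
    star_tensorVec_dotProduct_maxEntVec, maxEntVec_dotProduct_tensorVec, sq, sub_self]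

lemma two_smul_tensorVec_eq_polarization (x y : Fin 4 → ℂ) :
    (2 : ℂ) • tensorVec x (star ∘ y) =
      tensorVec (x + y) (star ∘ (x + y)) + I • tensorVec (x + I • y) (star ∘ (x + I • y))
        - (1 + I) • (tensorVec x (star ∘ x) + tensorVec y (star ∘ y)) := by
  ext p
  simp only [tensorVec, Pi.add_apply, Pi.sub_apply, Pi.smul_apply, smul_eq_mul,
    Function.comp_apply, Complex.star_def, map_add, map_mul, Complex.conj_I]
  linear_combination
    (x p.1 * conj (y p.2) - y p.1 * conj (x p.2) + y p.1 * conj (y p.2) * I) * I_sq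

lemma tensorVec_mem_span_tensorVec_self_conj (x y : Fin 4 → ℂ) :
    tensorVec x (star ∘ y) ∈
      Submodule.span ℂ {v | ∃ φ : Fin 4 → ℂ, v = tensorVec φ (star ∘ φ)} := by
  set S := Submodule.span ℂ {v | ∃ φ : Fin 4 → ℂ, v = tensorVec φ (star ∘ φ)}
  have hmem (φ : Fin 4 → ℂ) : tensorVec φ (star ∘ φ) ∈ S := Submodule.subset_span ⟨φ, rfl⟩
  rw [← Submodule.smul_mem_iff S (two_ne_zero : (2 : ℂ) ≠ 0), two_smul_tensorVec_eq_polarization]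
  exact sub_mem (add_mem (hmem _) (S.smul_mem I (hmem _)))
    (S.smul_mem _ (add_mem (hmem _) (hmem _)))

lemma tensorVec_single_star_single (k m : Fin 4) :
    tensorVec (Pi.single k 1) (star ∘ Pi.single m 1) = Pi.single (k, m) (1 : ℂ) := by
  ext ⟨i, j⟩
  simp only [tensorVec, Function.comp_apply, Pi.single_apply, Prod.ext_iff]
  split_ifs <;> simp_all

lemma span_tensorVec_self_conj_eq_top :
    Submodule.span ℂ {v | ∃ φ : Fin 4 → ℂ, v = tensorVec φ (star ∘ φ)} = ⊤ := by
  refine eq_top_iff.2 ((Pi.basisFun ℂ _).span_eq.symm.le.trans (Submodule.span_le.2 ?_))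
  rintro _ ⟨⟨k, m⟩, rfl⟩
  rw [Pi.basisFun_apply, ← tensorVec_single_star_single]
  exact tensorVec_mem_span_tensorVec_self_conj _ _

theorem reduction_witness_spanning_property :
    (∀ φ : Fin 4 → ℂ, expec (Wabcd 0 1 1 1) (tensorVec φ (star ∘ φ)) = 0) ∧
    Submodule.span ℂ
      {v : Fin 4 × Fin 4 → ℂ | ∃ φ : Fin 4 → ℂ, v = tensorVec φ (star ∘ φ)} = ⊤ :=
  ⟨expec_Wabcd_zero_one_one_one_tensorVec, span_tensorVec_self_conj_eq_top⟩
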